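/- arXiv:math/0508616 — 4 statements merged into one kernel-verified Lean document; each statement's English description precedes it below -/
import Mathlib

section
/- The decreasing rearrangement of a summable non-negative sequence is 1-Lipschitz in the $\ell^1$ metric: for any two summable non-negative sequences $x, y$, one has $\sum_{i\geq 1} |x_i^\downarrow - y_i^\downarrow| \leq \sum_{i\geq 1} |x_i - y_i|$. -/
open Filter Topology

/-- The decreasing rearrangement of a sequence of reals: `dRearr x n` is the
`(n+1)`-th largest value of `x`, defined as the infimum over sets `S` of `n`
indices of the supremum (least upper bound) of `x` outside `S`. -/
noncomputable def dRearr (x : ℕ → ℝ) (n : ℕ) : ℝ :=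
  sInf {a : ℝ | ∃ S : Finset ℕ, S.card = n ∧ ∀ i ∉ S, x i ≤ a}

namespace DR

variable {x y : ℕ → ℝ}

lemma mem_nonneg (h0 : ∀ i, 0 ≤ x i) {n : ℕ} {a : ℝ}
    (ha : a ∈ {a : ℝ | ∃ S : Finset ℕ, S.card = n ∧ ∀ i ∉ S, x i ≤ a}) : 0 ≤ a := by
  obtain ⟨S, -, hS⟩ := ha
  obtain ⟨i, hi⟩ := Infinite.exists_notMem_finset S
  exact (h0 i).trans (hS i hi)

lemma bddBelow (h0 : ∀ i, 0 ≤ x i) (n : ℕ) :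
    BddBelow {a : ℝ | ∃ S : Finset ℕ, S.card = n ∧ ∀ i ∉ S, x i ≤ a} :=
  ⟨0, fun _ ha => mem_nonneg h0 ha⟩

lemma dRearr_nonneg (h0 : ∀ i, 0 ≤ x i) (n : ℕ) : 0 ≤ dRearr x n :=
  Real.sInf_nonneg (fun _ ha => mem_nonneg h0 ha)

/-- argmax outside any finite set exists -/
lemma exists_argmax (hx : Summable x) (h0 : ∀ i, 0 ≤ x i) (S : Finset ℕ) :
    ∃ j, j ∉ S ∧ ∀ i ∉ S, x i ≤ x j := by
  by_cases h : ∀ i ∉ S, x i = 0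
  · obtain ⟨j, hj⟩ := Infinite.exists_notMem_finset S
    exact ⟨j, hj, fun i hi => by rw [h i hi, h j hj]⟩
  · push_neg at h
    obtain ⟨i0, hi0S, hi0⟩ := h
    have hc : 0 < x i0 := lt_of_le_of_ne (h0 i0) (Ne.symm hi0)
    have hev : ∀ᶠ i in atTop, x i < x i0 := hx.tendsto_atTop_zero.eventually_lt_const hc
    obtain ⟨N, hN⟩ := eventually_atTop.1 hev
    -- candidates: indices < N not in S, plus i0
    set T : Finset ℕ := insert i0 ((Finset.range N).filter (fun i => i ∉ S)) with hT
    have hTne : T.Nonempty := ⟨i0, Finset.mem_insert_self _ _⟩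
    obtain ⟨j, hjT, hj⟩ := T.exists_max_image x hTne
    have hjS : j ∉ S := by
      rcases Finset.mem_insert.1 hjT with h1 | h1
      · rw [h1]; exact hi0S
      · exact (Finset.mem_filter.1 h1).2
    refine ⟨j, hjS, fun i hiS => ?_⟩
    by_cases hiN : i < N
    · exact hj i (Finset.mem_insert_of_mem (Finset.mem_filter.2 ⟨Finset.mem_range.2 hiN, hiS⟩))
    · exact le_trans (hN i (not_lt.1 hiN)).le (le_trans (hj i0 (Finset.mem_insert_self _ _)) le_rfl)

lemma nonempty_A (hx : Summable x) (h0 : ∀ i, 0 ≤ x i) (n : ℕ) :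
    {a : ℝ | ∃ S : Finset ℕ, S.card = n ∧ ∀ i ∉ S, x i ≤ a}.Nonempty := by
  obtain ⟨j, -, hj⟩ := exists_argmax hx h0 (Finset.range n)
  exact ⟨x j, Finset.range n, Finset.card_range n, hj⟩

lemma dRearr_le (h0 : ∀ i, 0 ≤ x i) {n : ℕ} {a : ℝ}
    (ha : a ∈ {a : ℝ | ∃ S : Finset ℕ, S.card = n ∧ ∀ i ∉ S, x i ≤ a}) :
    dRearr x n ≤ a :=
  csInf_le (bddBelow h0 n) ha

lemma dRearr_mono (hy : Summable y) (hy0 : ∀ i, 0 ≤ y i) (h0 : ∀ i, 0 ≤ x i)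
    (hxy : ∀ i, x i ≤ y i) (n : ℕ) : dRearr x n ≤ dRearr y n := by
  refine csInf_le_csInf (bddBelow h0 n) (nonempty_A hy hy0 n) ?_
  rintro a ⟨S, hS, ha⟩
  exact ⟨S, hS, fun i hi => (hxy i).trans (ha i hi)⟩

/-- attainment: the infimum is a member. -/
lemma dRearr_mem (hx : Summable x) (h0 : ∀ i, 0 ≤ x i) (n : ℕ) :
    ∃ S : Finset ℕ, S.card = n ∧ ∀ i ∉ S, x i ≤ dRearr x n := by
  set d := dRearr x n with hd
  have key : ∀ V : Finset ℕ, (∀ i ∈ V, d < x i) → V.card ≤ n := by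
    intro V hV
    rcases V.eq_empty_or_nonempty with rfl | hVne
    · simp
    obtain ⟨m, hmV, hm⟩ := V.exists_min_image x hVne
    have hdm : d < x m := hV m hmV
    obtain ⟨a, ⟨S, hScard, hSa⟩, haxm⟩ :=
      (csInf_lt_iff (bddBelow h0 n) (nonempty_A hx h0 n)).1 hdm
    have hVS : V ⊆ S := by
      intro i hiV
      by_contra hiS
      exact absurd ((hSa i hiS).trans_lt ((haxm.trans_le (hm i hiV)))) (lt_irrefl _)
    calc V.card ≤ S.card := Finset.card_le_card hVS
    _ = n := hScard
  have hUfin : {i | d < x i}.Finite := by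
    by_contra hinf
    obtain ⟨V, hVsub, hVcard⟩ := Set.Infinite.exists_subset_card_eq hinf (n + 1)
    have := key V (fun i hi => hVsub hi)
    omega
  have hcard : hUfin.toFinset.card ≤ n :=
    key _ (fun i hi => hUfin.mem_toFinset.1 hi)
  obtain ⟨T, hTsub, hTcard⟩ := Infinite.exists_superset_card_eq hUfin.toFinset n hcard
  refine ⟨T, hTcard, fun i hiT => ?_⟩
  by_contra hlt
  exact hiT (hTsub (hUfin.mem_toFinset.2 (not_le.1 hlt)))

lemma sum_le (hx : Summable x) (h0 : ∀ i, 0 ≤ x i) (S : Finset ℕ) :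
    ∑ i ∈ S, x i ≤ ∑ i ∈ Finset.range S.card, dRearr x i := by
  set n := S.card with hn
  clear_value n
  induction n generalizing S with
  | zero => simp [Finset.card_eq_zero.1 hn.symm]
  | succ n ih =>
    have hSne : S.Nonempty := Finset.card_pos.1 (by omega)
    obtain ⟨s, hsS, hs⟩ := S.exists_min_image x hSne
    obtain ⟨T, hTcard, hT⟩ := dRearr_mem hx h0 n
    have : ∃ t ∈ S, t ∉ T := by
      by_contra hc
      push_neg at hc
      have := Finset.card_le_card hc
      omega
    obtain ⟨t, htS, htT⟩ := this
    have hxs : x s ≤ dRearr x n := (hs t htS).trans (hT t htT)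
    have herase : (S.erase s).card = n := by rw [Finset.card_erase_of_mem hsS]; omega
    calc ∑ i ∈ S, x i = ∑ i ∈ S.erase s, x i + x s := (Finset.sum_erase_add S x hsS).symm
    _ ≤ ∑ i ∈ Finset.range n, dRearr x i + dRearr x n := by
        refine add_le_add ?_ hxs
        exact ih (S.erase s) herase.symm
    _ = ∑ i ∈ Finset.range (n + 1), dRearr x i := (Finset.sum_range_succ _ _).symm

lemma range_sum_le (hx : Summable x) (h0 : ∀ i, 0 ≤ x i) (n : ℕ) :
    ∑ i ∈ Finset.range n, dRearr x i ≤ ∑' i, x i := by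
  have : ∃ S : Finset ℕ, S.card = n ∧ ∑ i ∈ Finset.range n, dRearr x i ≤ ∑ i ∈ S, x i := by
    induction n with
    | zero => exact ⟨∅, rfl, by simp⟩
    | succ n ih =>
      obtain ⟨S, hScard, hS⟩ := ih
      obtain ⟨j, hjS, hj⟩ := exists_argmax hx h0 S
      have hdj : dRearr x n ≤ x j := dRearr_le h0 ⟨S, hScard, hj⟩
      refine ⟨insert j S, by rw [Finset.card_insert_of_notMem hjS, hScard], ?_⟩
      rw [Finset.sum_insert hjS, Finset.sum_range_succ]
      linarith
  obtain ⟨S, -, hS⟩ := this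
  exact hS.trans (Summable.sum_le_tsum S (fun i _ => h0 i) hx)

lemma summable_dRearr (hx : Summable x) (h0 : ∀ i, 0 ≤ x i) : Summable (dRearr x) :=
  summable_of_sum_range_le (dRearr_nonneg h0) (range_sum_le hx h0)

lemma tsum_dRearr (hx : Summable x) (h0 : ∀ i, 0 ≤ x i) :
    ∑' i, dRearr x i = ∑' i, x i := by
  refine le_antisymm (Summable.tsum_le_of_sum_range_le (summable_dRearr hx h0) (range_sum_le hx h0)) ?_
  refine Summable.tsum_le_of_sum_le hx (fun S => ?_)
  exact (sum_le hx h0 S).trans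
    (Summable.sum_le_tsum _ (fun i _ => dRearr_nonneg h0 i) (summable_dRearr hx h0))

end DR

theorem stmt1 (x y : ℕ → ℝ)
    (hx_nonneg : ∀ i, 0 ≤ x i) (hy_nonneg : ∀ i, 0 ≤ y i)
    (hx_sum : Summable x) (hy_sum : Summable y) :
    ∑' i, |dRearr x i - dRearr y i| ≤ ∑' i, |x i - y i| := by
  set u : ℕ → ℝ := fun i => max (x i) (y i) with hu
  set v : ℕ → ℝ := fun i => min (x i) (y i) with hv
  have hu0 : ∀ i, 0 ≤ u i := fun i => le_max_of_le_left (hx_nonneg i)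
  have hv0 : ∀ i, 0 ≤ v i := fun i => le_min (hx_nonneg i) (hy_nonneg i)
  have hu_sum : Summable u := by
    refine Summable.of_nonneg_of_le hu0 (fun i => ?_) (hx_sum.add hy_sum)
    exact max_le_add_of_nonneg (hx_nonneg i) (hy_nonneg i)
  have hv_sum : Summable v := Summable.of_nonneg_of_le hv0 (fun i => min_le_left _ _) hx_sum
  have hdx := DR.summable_dRearr hx_sum hx_nonneg
  have hdy := DR.summable_dRearr hy_sum hy_nonneg
  have hdu := DR.summable_dRearr hu_sum hu0
  have hdv := DR.summable_dRearr hv_sum hv0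
  -- pointwise inequalities
  have hmax : ∀ n, max (dRearr x n) (dRearr y n) ≤ dRearr u n := fun n =>
    max_le (DR.dRearr_mono hu_sum hu0 hx_nonneg (fun i => le_max_left _ _) n)
      (DR.dRearr_mono hu_sum hu0 hy_nonneg (fun i => le_max_right _ _) n)
  have hmin : ∀ n, dRearr v n ≤ min (dRearr x n) (dRearr y n) := fun n =>
    le_min (DR.dRearr_mono hx_sum hx_nonneg hv0 (fun i => min_le_left _ _) n)
      (DR.dRearr_mono hy_sum hy_nonneg hv0 (fun i => min_le_right _ _) n)
  have hM_sum : Summable (fun n => max (dRearr x n) (dRearr y n)) :=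
    Summable.of_nonneg_of_le
      (fun n => le_max_of_le_left (DR.dRearr_nonneg hx_nonneg n)) hmax hdu
  have hm_sum : Summable (fun n => min (dRearr x n) (dRearr y n)) :=
    Summable.of_nonneg_of_le
      (fun n => le_min (DR.dRearr_nonneg hx_nonneg n) (DR.dRearr_nonneg hy_nonneg n))
      (fun n => min_le_left _ _) hdx
  -- |a - b| = max - min
  have habs : ∀ n, |dRearr x n - dRearr y n|
      = max (dRearr x n) (dRearr y n) - min (dRearr x n) (dRearr y n) := by
    intro n; rw [max_sub_min_eq_abs, abs_sub_comm]
  have habs' : ∀ i, |x i - y i| = u i - v i := by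
    intro i; rw [hu, hv]; dsimp only; rw [max_sub_min_eq_abs, abs_sub_comm]
  calc ∑' i, |dRearr x i - dRearr y i|
      = ∑' i, (max (dRearr x i) (dRearr y i) - min (dRearr x i) (dRearr y i)) := by
        exact tsum_congr habs
    _ = (∑' i, max (dRearr x i) (dRearr y i)) - ∑' i, min (dRearr x i) (dRearr y i) :=
        Summable.tsum_sub hM_sum hm_sum
    _ ≤ (∑' i, dRearr u i) - ∑' i, dRearr v i := by
        refine sub_le_sub (Summable.tsum_le_tsum hmax hM_sum hdu) (Summable.tsum_le_tsum hmin hdv hm_sum)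
    _ = (∑' i, u i) - ∑' i, v i := by
        rw [DR.tsum_dRearr hu_sum hu0, DR.tsum_dRearr hv_sum hv0]
    _ = ∑' i, (u i - v i) := (Summable.tsum_sub hu_sum hv_sum).symm
    _ = ∑' i, |x i - y i| := tsum_congr (fun i => (habs' i).symm)
end

section
/- Let $(m_n)$ be a sequence of positive reals with $m_n \to \infty$, and for each $n$ let $(Z^{i,n})_{i \in \mathbb{N}}$ be non-negative reals and $(U^i)_{i \in \mathbb{N}}$ non-negative reals with $\sum_i U^i < \infty$. Suppose that: (a) $Z^{i,n} \to U^i$ as $n \to \infty$ for each $i$, and (b) for every $\eta > 0$ there exists $k$ such that $\sum_{i > k} Z^{i,n} < \eta$ for all sufficiently large $n$ and $\sum_{i > k} U^i < \eta$. Then $m_n\left(1 - \prod_{i \geq 1}(1 - m_n^{-1} Z^{i,n})\right) \to \sum_{i \geq 1} U^i$, where the product is over those $i$ with $m_n^{-1} Z^{i,n} < 1$ (which holds for all $i$ when $n$ is large enough). -/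
open Filter Topology

/-! For `0 ≤ xᵢ ≤ 1` with `s = ∑ xᵢ` one has `1 - s ≤ ∏ (1 - xᵢ) ≤ exp (-s) ≤ (1 + s)⁻¹`.
With `xᵢ = Z n i / m n` and `S n = ∑ Z n i`, this squeezes `m n * (1 - ∏ (1 - Z n i / m n))`
between `S n / (1 + S n / m n)` and `S n` as soon as `S n < m n`, which also makes every factor
of the product genuine. Both bounds tend to `∑ U i`: hypotheses (a) and (b) give
`S n → ∑ U i`, hence `S n / m n → 0`. -/

theorem sum_range_succ_add_tsum_subtype_lt {α : Type*} [UniformSpace α] [AddCommGroup α]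
    [IsUniformAddGroup α] [CompleteSpace α] [T2Space α] {f : ℕ → α} (hf : Summable f) (k : ℕ) :
    ∑ i ∈ Finset.range (k + 1), f i + ∑' i : {i : ℕ // k < i}, f i = ∑' i, f i := by
  rw [← hf.sum_add_tsum_subtype_compl (Finset.range (k + 1))]
  congr 1
  exact (Equiv.subtypeEquivRight fun i => by simp).tsum_eq
    (fun i : {i : ℕ // i ∉ Finset.range (k + 1)} => f i)

theorem tendsto_tsum_of_tendsto_of_tail_lt {α : Type*} {l : Filter α} {f : α → ℕ → ℝ}
    {g : ℕ → ℝ} (hf0 : ∀ n i, 0 ≤ f n i) (hf : ∀ n, Summable (f n)) (hg0 : ∀ i, 0 ≤ g i)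
    (hg : Summable g) (hlim : ∀ i, Tendsto (fun n => f n i) l (𝓝 (g i)))
    (htail : ∀ η > (0 : ℝ), ∃ k : ℕ,
      (∀ᶠ n in l, ∑' i : {i : ℕ // k < i}, f n i < η) ∧ ∑' i : {i : ℕ // k < i}, g i < η) :
    Tendsto (fun n => ∑' i, f n i) l (𝓝 (∑' i, g i)) := by
  refine Metric.tendsto_nhds.2 fun ε hε => ?_
  obtain ⟨k, hf_tail, hg_tail⟩ := htail (ε / 2) (half_pos hε)
  have hhead : Tendsto (fun n => ∑ i ∈ Finset.range (k + 1), f n i) l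
      (𝓝 (∑ i ∈ Finset.range (k + 1), g i)) := tendsto_finsetSum _ fun i _ => hlim i
  filter_upwards [hf_tail, Metric.tendsto_nhds.1 hhead (ε / 2) (half_pos hε)] with n hfn hhn
  have hfn0 : 0 ≤ ∑' i : {i : ℕ // k < i}, f n i := tsum_nonneg fun i => hf0 n i
  have hg0' : 0 ≤ ∑' i : {i : ℕ // k < i}, g i := tsum_nonneg fun i => hg0 i
  rw [← sum_range_succ_add_tsum_subtype_lt (hf n) k, ← sum_range_succ_add_tsum_subtype_lt hg k,
    Real.dist_eq, abs_lt]
  rw [Real.dist_eq, abs_lt] at hhn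
  constructor <;> linarith [hhn.1, hhn.2]

theorem one_sub_sum_le_prod_one_sub {ι : Type*} (s : Finset ι) {x : ι → ℝ}
    (hx0 : ∀ i ∈ s, 0 ≤ x i) (hx1 : ∀ i ∈ s, x i ≤ 1) :
    1 - ∑ i ∈ s, x i ≤ ∏ i ∈ s, (1 - x i) := by
  classical
  induction s using Finset.induction_on with
  | empty => simp
  | insert a s ha ih =>
    simp only [Finset.mem_insert, forall_eq_or_imp] at hx0 hx1
    rw [Finset.prod_insert ha, Finset.sum_insert ha]
    have hsum : 0 ≤ ∑ i ∈ s, x i := Finset.sum_nonneg hx0.2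
    calc 1 - (x a + ∑ i ∈ s, x i) ≤ (1 - x a) * (1 - ∑ i ∈ s, x i) := by
          nlinarith [hx0.1]
      _ ≤ (1 - x a) * ∏ i ∈ s, (1 - x i) :=
          mul_le_mul_of_nonneg_left (ih hx0.2 hx1.2) (sub_nonneg.2 hx1.1)

theorem prod_one_sub_le_exp_neg_sum {ι : Type*} (s : Finset ι) {x : ι → ℝ}
    (hx1 : ∀ i ∈ s, x i ≤ 1) :
    ∏ i ∈ s, (1 - x i) ≤ Real.exp (-∑ i ∈ s, x i) := by
  rw [← Finset.sum_neg_distrib, Real.exp_sum]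
  exact Finset.prod_le_prod (fun i hi => sub_nonneg.2 (hx1 i hi))
    fun i _ => by linarith [Real.add_one_le_exp (-x i)]

section tprod

variable {ι : Type*} {x : ι → ℝ}

theorem hasProd_one_sub_of_summable (hx : Summable x) :
    HasProd (fun i => 1 - x i) (∏' i, (1 - x i)) := by
  simpa only [sub_eq_add_neg] using (Real.multipliable_one_add_of_summable hx.neg).hasProd

theorem one_sub_tsum_le_tprod_one_sub (hx0 : ∀ i, 0 ≤ x i) (hx1 : ∀ i, x i ≤ 1)
    (hx : Summable x) : 1 - ∑' i, x i ≤ ∏' i, (1 - x i) :=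
  ge_of_tendsto' (hasProd_one_sub_of_summable hx) fun s =>
    (sub_le_sub_left (hx.sum_le_tsum s fun i _ => hx0 i) 1).trans
      (one_sub_sum_le_prod_one_sub s (fun i _ => hx0 i) fun i _ => hx1 i)

theorem tprod_one_sub_le_exp_neg_tsum (hx1 : ∀ i, x i ≤ 1) (hx : Summable x) :
    ∏' i, (1 - x i) ≤ Real.exp (-∑' i, x i) :=
  le_of_tendsto_of_tendsto' (hasProd_one_sub_of_summable hx)
    ((Real.continuous_exp.tendsto _).comp (Tendsto.neg hx.hasSum))
    fun s => prod_one_sub_le_exp_neg_sum s fun i _ => hx1 i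

variable {m : ℝ} {z : ι → ℝ}

theorem mul_one_sub_tprod_one_sub_div_le_tsum (hm : 0 < m) (hz0 : ∀ i, 0 ≤ z i)
    (hzm : ∀ i, z i ≤ m) (hz : Summable z) :
    m * (1 - ∏' i, (1 - z i / m)) ≤ ∑' i, z i := by
  have h := one_sub_tsum_le_tprod_one_sub (fun i => div_nonneg (hz0 i) hm.le)
    (fun i => (div_le_one hm).2 (hzm i)) (hz.div_const m)
  rw [tsum_div_const] at h
  calc m * (1 - ∏' i, (1 - z i / m)) ≤ m * ((∑' i, z i) / m) := by gcongr; linarith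
    _ = ∑' i, z i := mul_div_cancel₀ _ hm.ne'

theorem tsum_div_one_add_le_mul_one_sub_tprod_one_sub_div (hm : 0 < m) (hz0 : ∀ i, 0 ≤ z i)
    (hzm : ∀ i, z i ≤ m) (hz : Summable z) :
    (∑' i, z i) / (1 + (∑' i, z i) / m) ≤ m * (1 - ∏' i, (1 - z i / m)) := by
  have hS : 0 ≤ ∑' i, z i := tsum_nonneg hz0
  have hprod := tprod_one_sub_le_exp_neg_tsum (fun i => (div_le_one hm).2 (hzm i)) (hz.div_const m)
  rw [tsum_div_const] at hprod
  have hexp : Real.exp (-((∑' i, z i) / m)) ≤ (1 + (∑' i, z i) / m)⁻¹ := by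
    rw [Real.exp_neg]
    exact inv_anti₀ (by positivity) (by linarith [Real.add_one_le_exp ((∑' i, z i) / m)])
  calc (∑' i, z i) / (1 + (∑' i, z i) / m) = m * (1 - (1 + (∑' i, z i) / m)⁻¹) := by
        have : m + ∑' i, z i ≠ 0 := by positivity
        field_simp
        ring
    _ ≤ m * (1 - ∏' i, (1 - z i / m)) := by gcongr; linarith

end tprod

theorem stmt3_general (m : ℕ → ℝ) (Z : ℕ → ℕ → ℝ) (U : ℕ → ℝ)
    (hm : Tendsto m atTop atTop) (hm_pos : ∀ n, 0 < m n)
    (hZ_nonneg : ∀ n i, 0 ≤ Z n i) (hZ_sum : ∀ n, Summable (Z n))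
    (hU_sum : Summable U)
    (ha : ∀ i, Tendsto (fun n => Z n i) atTop (𝓝 (U i)))
    (hb : ∀ η > (0 : ℝ), ∃ k : ℕ,
      (∀ᶠ n in atTop, ∑' i : {i : ℕ // k < i}, Z n i < η) ∧
      ∑' i : {i : ℕ // k < i}, U i < η) :
    Tendsto
      (fun n => m n * (1 - ∏' i, (if Z n i / m n < 1 then 1 - Z n i / m n else 1)))
      atTop (𝓝 (∑' i, U i)) := by
  have hU_nonneg (i : ℕ) : 0 ≤ U i := ge_of_tendsto' (ha i) fun n => hZ_nonneg n i
  have hS : Tendsto (fun n => ∑' i, Z n i) atTop (𝓝 (∑' i, U i)) :=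
    tendsto_tsum_of_tendsto_of_tail_lt hZ_nonneg hZ_sum hU_nonneg hU_sum ha hb
  have hZ_lt : ∀ᶠ n in atTop, ∀ i, Z n i < m n := by
    filter_upwards [hS.eventually (gt_mem_nhds (lt_add_one _)),
      hm.eventually_ge_atTop (∑' i, U i + 1)] with n hSn hmn i
    exact ((hZ_sum n).le_tsum i fun j _ => hZ_nonneg n j).trans_lt (hSn.trans_le hmn)
  have hlower : Tendsto (fun n => (∑' i, Z n i) / (1 + (∑' i, Z n i) / m n)) atTop
      (𝓝 (∑' i, U i)) := by
    have h := hS.div (tendsto_const_nhds.add (hS.div_atTop hm)) (by norm_num : (1 : ℝ) + 0 ≠ 0)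
    rwa [add_zero, div_one] at h
  refine tendsto_of_tendsto_of_tendsto_of_le_of_le' hlower hS ?_ ?_ <;>
    filter_upwards [hZ_lt] with n hn <;>
    rw [tprod_congr fun i => if_pos ((div_lt_one (hm_pos n)).2 (hn i))]
  · exact tsum_div_one_add_le_mul_one_sub_tprod_one_sub_div (hm_pos n) (hZ_nonneg n)
      (fun i => (hn i).le) (hZ_sum n)
  · exact mul_one_sub_tprod_one_sub_div_le_tsum (hm_pos n) (hZ_nonneg n)
      (fun i => (hn i).le) (hZ_sum n)

theorem stmt3 (m : ℕ → ℝ) (Z : ℕ → ℕ → ℝ) (U : ℕ → ℝ)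
    (hm : Tendsto m atTop atTop) (hm_pos : ∀ n, 0 < m n)
    (hZ_nonneg : ∀ n i, 0 ≤ Z n i) (hZ_sum : ∀ n, Summable (Z n))
    (hU_nonneg : ∀ i, 0 ≤ U i) (hU_sum : Summable U)
    (ha : ∀ i, Tendsto (fun n => Z n i) atTop (𝓝 (U i)))
    (hb : ∀ η > (0 : ℝ), ∃ k : ℕ,
      (∀ᶠ n in atTop, ∑' i : {i : ℕ // k < i}, Z n i < η) ∧
      ∑' i : {i : ℕ // k < i}, U i < η) :
    Tendsto
      (fun n => m n * (1 - ∏' i, (if Z n i / m n < 1 then 1 - Z n i / m n else 1)))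
      atTop (𝓝 (∑' i, U i)) :=
  stmt3_general m Z U hm hm_pos hZ_nonneg hZ_sum hU_sum ha hb
end

section
/- Let $T$ be a positive random variable with strictly positive density $q$ on $(0,\infty)$, and suppose $E[T^{1-1/\beta}] < \infty$ for some $\beta \in (1,2)$. Let $(T, \Delta_1^*)$ have joint density $c_\beta\, s_1^{-1/\beta}\, s_0^{-1}\, q(s_0 - s_1)$ on $\{0 < s_1 < s_0\}$ with $c_\beta = (\beta \Gamma(1 - 1/\beta))^{-1}$ (the size-biased first jump of a $1/\beta$-stable subordinator at time 1). Then $E[T - \Delta_1^*] \leq C\, E[T^{1-1/\beta}]$ for some finite constant $C$ depending only on $\beta$; in particular $E[T - \Delta_1^*] < \infty$. -/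
/-!
Writing `u = s₀ - s₁` for the remainder `T - Δ₁*` and integrating `s₁` out first, the left-hand
side becomes `c_β ∫ u q(u) ∫₀^∞ s₁^{-1/β} (u + s₁)⁻¹ ds₁ du`. Splitting the inner integral at
`s₁ = u` and bounding `(u + s₁)⁻¹` by `u⁻¹` resp. `s₁⁻¹` gives at most
`((1 - 1/β)⁻¹ + β) u^{-1/β}`, so the whole is at most a constant times `∫ u^{1-1/β} q(u) du`.
-/

open MeasureTheory Set Function
open scoped ENNReal

theorem lintegral_lintegral_indicator {α β : Type*} [MeasurableSpace α] [MeasurableSpace β]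
    {μ : Measure α} {ν : Measure β} {A : Set α} {B : α → Set β} (hA : MeasurableSet A)
    (hB : ∀ x, MeasurableSet (B x)) (f : α → β → ℝ≥0∞) :
    ∫⁻ x in A, ∫⁻ y in B x, f x y ∂ν ∂μ
      = ∫⁻ x, ∫⁻ y, {z : α × β | z.1 ∈ A ∧ z.2 ∈ B z.1}.indicator (uncurry f) (x, y) ∂ν ∂μ := by
  rw [← lintegral_indicator hA]
  refine lintegral_congr fun x => ?_
  by_cases hx : x ∈ A
  · simp only [indicator_of_mem hx, ← lintegral_indicator (hB x)]
    refine lintegral_congr fun y => ?_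
    by_cases hy : y ∈ B x <;> simp [hx, hy]
  · simp [hx]

theorem lintegral_Ioi_lintegral_Ioo_eq {F : ℝ → ℝ → ℝ≥0∞} (hF : Measurable (uncurry F)) :
    ∫⁻ s in Ioi 0, ∫⁻ t in Ioo 0 s, F s t = ∫⁻ u in Ioi 0, ∫⁻ t in Ioi 0, F (u + t) t := by
  set T : Set (ℝ × ℝ) := {z | z.1 ∈ Ioi 0 ∧ z.2 ∈ Ioo 0 z.1}
  have hT : MeasurableSet T := by
    simp only [T, mem_Ioi, mem_Ioo]
    measurability
  have hG : Measurable (T.indicator (uncurry F)) := hF.indicator hT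
  calc ∫⁻ s in Ioi 0, ∫⁻ t in Ioo 0 s, F s t
      = ∫⁻ s, ∫⁻ t, T.indicator (uncurry F) (s, t) :=
        lintegral_lintegral_indicator measurableSet_Ioi (fun _ => measurableSet_Ioo) F
    _ = ∫⁻ t, ∫⁻ s, T.indicator (uncurry F) (s, t) :=
        lintegral_lintegral_swap hG.aemeasurable
    _ = ∫⁻ t, ∫⁻ u, T.indicator (uncurry F) (u + t, t) := by
        refine lintegral_congr fun t => ?_
        exact (lintegral_add_right_eq_self (fun s => T.indicator (uncurry F) (s, t)) t).symm
    _ = ∫⁻ u, ∫⁻ t, T.indicator (uncurry F) (u + t, t) :=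
        lintegral_lintegral_swap (hG.comp (by fun_prop)).aemeasurable
    _ = ∫⁻ u in Ioi 0, ∫⁻ t in Ioi 0, F (u + t) t := by
        rw [lintegral_lintegral_indicator measurableSet_Ioi (fun _ => measurableSet_Ioi)]
        refine lintegral_congr fun u => lintegral_congr fun t => ?_
        have hmem : (u + t, t) ∈ T ↔ (u, t) ∈ {z : ℝ × ℝ | z.1 ∈ Ioi 0 ∧ z.2 ∈ Ioi 0} := by
          simp only [T, mem_ofPred_eq, mem_Ioi, mem_Ioo]
          exact ⟨fun ⟨_, ht, htu⟩ => ⟨by linarith, ht⟩,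
            fun ⟨hu, ht⟩ => ⟨by linarith, ht, by linarith⟩⟩
        simp only [indicator_apply, hmem, uncurry_apply_pair]

theorem lintegral_Ioc_rpow_neg {p u : ℝ} (hp : p < 1) (hu : 0 ≤ u) :
    ∫⁻ x in Ioc 0 u, ENNReal.ofReal (x ^ (-p)) = ENNReal.ofReal (u ^ (1 - p) / (1 - p)) := by
  have hint : IntegrableOn (fun x : ℝ => x ^ (-p)) (Ioc 0 u) := by
    rw [← intervalIntegrable_iff_integrableOn_Ioc_of_le hu]
    exact intervalIntegral.intervalIntegrable_rpow' (by linarith)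
  rw [← ofReal_integral_eq_lintegral_ofReal hint
    (ae_restrict_of_forall_mem measurableSet_Ioc fun x hx => Real.rpow_nonneg hx.1.le _),
    ← intervalIntegral.integral_of_le hu, integral_rpow (Or.inl (by linarith)),
    Real.zero_rpow (by linarith), neg_add_eq_sub, sub_zero]

theorem lintegral_Ioi_rpow_neg_sub_one {p u : ℝ} (hp : 0 < p) (hu : 0 < u) :
    ∫⁻ x in Ioi u, ENNReal.ofReal (x ^ (-1 - p)) = ENNReal.ofReal (u ^ (-p) / p) := by
  rw [← ofReal_integral_eq_lintegral_ofReal (integrableOn_Ioi_rpow_of_lt (by linarith) hu)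
    (ae_restrict_of_forall_mem measurableSet_Ioi fun x hx => Real.rpow_nonneg (hu.trans hx).le _),
    integral_Ioi_rpow_of_lt (by linarith) hu, show -1 - p + 1 = -p by ring, neg_div_neg_eq]

theorem lintegral_rpow_neg_mul_inv_add_le {p u : ℝ} (hp₀ : 0 < p) (hp₁ : p < 1) (hu : 0 < u) :
    ∫⁻ x in Ioi 0, ENNReal.ofReal (x ^ (-p) * (u + x)⁻¹)
      ≤ ENNReal.ofReal (((1 - p)⁻¹ + p⁻¹) * u ^ (-p)) := by
  have h_near : ∫⁻ x in Ioc 0 u, ENNReal.ofReal (x ^ (-p) * (u + x)⁻¹)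
      ≤ ENNReal.ofReal (u⁻¹) * ENNReal.ofReal (u ^ (1 - p) / (1 - p)) := by
    rw [← lintegral_Ioc_rpow_neg hp₁ hu.le, ← lintegral_const_mul' _ _ ENNReal.ofReal_ne_top]
    refine setLIntegral_mono' measurableSet_Ioc fun x hx => ?_
    rw [← ENNReal.ofReal_mul (by positivity), mul_comm (u⁻¹)]
    gcongr
    · exact Real.rpow_nonneg hx.1.le _
    · linarith [hx.1]
  have h_far : ∫⁻ x in Ioi u, ENNReal.ofReal (x ^ (-p) * (u + x)⁻¹)
      ≤ ENNReal.ofReal (u ^ (-p) / p) := by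
    rw [← lintegral_Ioi_rpow_neg_sub_one hp₀ hu]
    refine setLIntegral_mono' measurableSet_Ioi fun x (hx : u < x) => ?_
    have hx₀ : 0 < x := hu.trans hx
    rw [show -1 - p = -p + -1 by ring, Real.rpow_add hx₀, Real.rpow_neg_one]
    gcongr
    linarith
  have h_split :
      u⁻¹ * (u ^ (1 - p) / (1 - p)) + u ^ (-p) / p = ((1 - p)⁻¹ + p⁻¹) * u ^ (-p) := by
    rw [Real.rpow_sub hu, Real.rpow_one, Real.rpow_neg hu.le]
    field_simp
  rw [← Ioc_union_Ioi_eq_Ioi hu.le, lintegral_union measurableSet_Ioi Ioc_disjoint_Ioi_same,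
    ← h_split, ENNReal.ofReal_add (by positivity) (by positivity),
    ENNReal.ofReal_mul (by positivity)]
  exact add_le_add h_near h_far

theorem lintegral_remainder_le {p c : ℝ} (hp₀ : 0 < p) (hp₁ : p < 1) (hc : 0 ≤ c) {q : ℝ → ℝ}
    (hq : Measurable q) :
    ∫⁻ s in Ioi 0, ∫⁻ t in Ioo 0 s, ENNReal.ofReal ((s - t) * (c * t ^ (-p) * s⁻¹ * q (s - t)))
      ≤ ENNReal.ofReal (c * ((1 - p)⁻¹ + p⁻¹)) *
          ∫⁻ u in Ioi 0, ENNReal.ofReal (u ^ (1 - p) * q u) := by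
  rw [lintegral_Ioi_lintegral_Ioo_eq (by fun_prop),
    ← lintegral_const_mul' _ _ ENNReal.ofReal_ne_top]
  refine setLIntegral_mono' measurableSet_Ioi fun u (hu : 0 < u) => ?_
  simp only [add_sub_cancel_right]
  calc ∫⁻ t in Ioi 0, ENNReal.ofReal (u * (c * t ^ (-p) * (u + t)⁻¹ * q u))
      = ENNReal.ofReal (c * u) * (∫⁻ t in Ioi 0, ENNReal.ofReal (t ^ (-p) * (u + t)⁻¹))
          * ENNReal.ofReal (q u) := by
        rw [← lintegral_const_mul' _ _ ENNReal.ofReal_ne_top,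
          ← lintegral_mul_const' _ _ ENNReal.ofReal_ne_top]
        refine setLIntegral_congr_fun measurableSet_Ioi fun t (ht : 0 < t) => ?_
        rw [← ENNReal.ofReal_mul (by positivity), ← ENNReal.ofReal_mul (by positivity)]
        ring_nf
    _ ≤ ENNReal.ofReal (c * u) * ENNReal.ofReal (((1 - p)⁻¹ + p⁻¹) * u ^ (-p))
          * ENNReal.ofReal (q u) := by
        gcongr
        exact lintegral_rpow_neg_mul_inv_add_le hp₀ hp₁ hu
    _ = ENNReal.ofReal (c * ((1 - p)⁻¹ + p⁻¹)) * ENNReal.ofReal (u ^ (1 - p) * q u) := by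
        have hp' : 0 < 1 - p := sub_pos.2 hp₁
        rw [← ENNReal.ofReal_mul (by positivity), ← ENNReal.ofReal_mul (by positivity),
          ← ENNReal.ofReal_mul (by positivity), Real.rpow_sub hu, Real.rpow_one,
          Real.rpow_neg hu.le]
        ring_nf

theorem stmt15_general (β : ℝ) (hβ : β ∈ Set.Ioo (1 : ℝ) 2) (q : ℝ → ℝ)
    (hq_meas : Measurable q)
    (hmom : (∫⁻ s₀ in Set.Ioi (0 : ℝ), ENNReal.ofReal (s₀ ^ (1 - 1 / β) * q s₀)) < ⊤) :
    ∃ C : ℝ≥0∞, C < ⊤ ∧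
      (∫⁻ s₀ in Set.Ioi (0 : ℝ), ∫⁻ s₁ in Set.Ioo (0 : ℝ) s₀,
          ENNReal.ofReal ((s₀ - s₁) *
            ((β * Real.Gamma (1 - 1 / β))⁻¹ * s₁ ^ (-(1 / β)) * s₀⁻¹ * q (s₀ - s₁))))
        ≤ C * ∫⁻ s₀ in Set.Ioi (0 : ℝ), ENNReal.ofReal (s₀ ^ (1 - 1 / β) * q s₀) ∧
      (∫⁻ s₀ in Set.Ioi (0 : ℝ), ∫⁻ s₁ in Set.Ioo (0 : ℝ) s₀,
          ENNReal.ofReal ((s₀ - s₁) *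
            ((β * Real.Gamma (1 - 1 / β))⁻¹ * s₁ ^ (-(1 / β)) * s₀⁻¹ * q (s₀ - s₁))))
        < ⊤ := by
  have hβ₀ : 0 < β := one_pos.trans hβ.1
  have hp₀ : 0 < 1 / β := by positivity
  have hp₁ : 1 / β < 1 := (div_lt_one hβ₀).2 hβ.1
  have hc : 0 ≤ (β * Real.Gamma (1 - 1 / β))⁻¹ := by
    have := Real.Gamma_pos_of_pos (sub_pos.2 hp₁)
    positivity
  have h := lintegral_remainder_le hp₀ hp₁ hc hq_meas
  exact ⟨_, ENNReal.ofReal_lt_top, h, h.trans_lt (ENNReal.mul_lt_top ENNReal.ofReal_lt_top hmom)⟩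

/-- Let `q` be a strictly positive probability density on `(0,∞)` (the density of
`T = T₁^β`), with `E[T^{1-1/β}] < ∞`, for `β ∈ (1,2)`.  With the joint density
`c_β s₁^{-1/β} s₀⁻¹ q(s₀ - s₁)` of `(T, Δ₁*)` on `{0 < s₁ < s₀}`, where
`c_β = (β Γ(1 - 1/β))⁻¹`, one has `E[T - Δ₁*] ≤ C E[T^{1-1/β}]` for some finite
constant `C` depending only on `β`; in particular `E[T - Δ₁*] < ∞`. -/
theorem stmt15 (β : ℝ) (hβ : β ∈ Set.Ioo (1 : ℝ) 2) (q : ℝ → ℝ)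
    (hq_nonneg : ∀ x, 0 ≤ q x) (hq_pos : ∀ x > (0 : ℝ), 0 < q x)
    (hq_meas : Measurable q)
    (hq_density : ∫⁻ x in Set.Ioi (0 : ℝ), ENNReal.ofReal (q x) = 1)
    (hmom : (∫⁻ s₀ in Set.Ioi (0 : ℝ), ENNReal.ofReal (s₀ ^ (1 - 1 / β) * q s₀)) < ⊤) :
    ∃ C : ℝ≥0∞, C < ⊤ ∧
      (∫⁻ s₀ in Set.Ioi (0 : ℝ), ∫⁻ s₁ in Set.Ioo (0 : ℝ) s₀,
          ENNReal.ofReal ((s₀ - s₁) *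
            ((β * Real.Gamma (1 - 1 / β))⁻¹ * s₁ ^ (-(1 / β)) * s₀⁻¹ * q (s₀ - s₁))))
        ≤ C * ∫⁻ s₀ in Set.Ioi (0 : ℝ), ENNReal.ofReal (s₀ ^ (1 - 1 / β) * q s₀) ∧
      (∫⁻ s₀ in Set.Ioi (0 : ℝ), ∫⁻ s₁ in Set.Ioo (0 : ℝ) s₀,
          ENNReal.ofReal ((s₀ - s₁) *
            ((β * Real.Gamma (1 - 1 / β))⁻¹ * s₁ ^ (-(1 / β)) * s₀⁻¹ * q (s₀ - s₁))))
        < ⊤ :=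
  stmt15_general β hβ q hq_meas hmom
end

section
/- Let $(h_{i,j})_{i,j\geq 1}$ be i.i.d. positive random variables with $E[h_{1,1}^{-1/\alpha}] < \infty$ for some $\alpha < 0$. Let $(u_j^{i,m})$ and $(u_j^i)$ be non-negative arrays, independent of the $h_{i,j}$, such that $u_j^{i,m} \to u_j^i$ as $m \to \infty$ for all $i,j$, and for every $\eta > 0$ there exists $k$ with $\sum_{i+j\geq k} (u_j^{i,m} + u_j^i) \leq \eta$ for all large $m$. If $\sum_{i,j} u_j^i < \infty$ a.s., then $X_m := \sum_{i,j\geq 1} u_j^{i,m} h_{i,j}^{-1/\alpha}$ converges in probability to $X := \sum_{i,j\geq 1} u_j^i h_{i,j}^{-1/\alpha}$, and both sums are a.s. finite. -/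
open Filter Topology MeasureTheory ProbabilityTheory
open scoped ENNReal

/-!
Write `Y_p = h_p^{-1/α}`. Since the weights are independent of `Y` and every `|Y_p|` has the same
finite mean `C`, weights `w_p` that are measurable functions of the arrays `(u^m, u)` satisfy
`E[∑ w_p |Y_p|] = C · E[∑ w_p]`. Restricting to the event `{∑ w_p ≤ K}`, again a function of the
arrays, keeps the right-hand side finite: this gives the a.s. summability of the weighted sums
(let `K → ∞`) and the Markov bound `P(∑ w_p ≤ η, ∑ w_p |Y_p| ≥ ε) ≤ η C / ε`.
Pointwise convergence together with the uniform tail bound makes `u^m → u` in `ℓ¹` almost surely,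
and `|X_m - X| ≤ ∑ |u^m_p - u_p| |Y_p|`, so the Markov bound with `w = |u^m - u|` turns this into
convergence in probability of `X_m` to `X`.
-/

theorem edist_tsum_mul_le_tsum_enorm_sub_mul {ι : Type*} {f g y : ι → ℝ}
    (hf : Summable fun i => f i * y i) (hg : Summable fun i => g i * y i) :
    edist (∑' i, f i * y i) (∑' i, g i * y i) ≤ ∑' i, ‖f i - g i‖ₑ * ‖y i‖ₑ := by
  rw [edist_eq_enorm_sub, ← hf.tsum_sub hg]
  refine enorm_tsum_le_tsum_enorm.trans_eq (tsum_congr fun i => ?_)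
  rw [← sub_mul, enorm_mul]

theorem enorm_tsum_abs {ι : Type*} {f : ι → ℝ} (hf : Summable f) :
    ‖∑' i, |f i|‖ₑ = ∑' i, ‖f i‖ₑ := by
  rw [Real.enorm_of_nonneg (tsum_nonneg fun _ => abs_nonneg _),
    ENNReal.ofReal_tsum_of_nonneg (fun _ => abs_nonneg _) hf.abs]
  simp only [Real.enorm_eq_ofReal_abs]

theorem tendsto_tsum_abs_sub_of_tendsto_of_tail_le {ι : Type*} {a : ℕ → ι → ℝ} {b : ι → ℝ}
    (ha0 : ∀ m i, 0 ≤ a m i) (hb0 : ∀ i, 0 ≤ b i) (ha : ∀ m, Summable (a m)) (hb : Summable b)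
    (hlim : ∀ i, Tendsto (a · i) atTop (𝓝 (b i)))
    (htail : ∀ η > 0, ∃ t : Set ι, tᶜ.Finite ∧ ∀ᶠ m in atTop, ∑' i : t, (a m i + b i) ≤ η) :
    Tendsto (fun m => ∑' i, |a m i - b i|) atTop (𝓝 0) := by
  have hsum : ∀ m, Summable fun i => |a m i - b i| := fun m => ((ha m).sub hb).abs
  refine tendsto_order.2 ⟨fun x hx => Eventually.of_forall fun m =>
    hx.trans_le (tsum_nonneg fun _ => abs_nonneg _), fun ε hε => ?_⟩
  obtain ⟨t, ht, ht_small⟩ := htail (ε / 2) (half_pos hε)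
  have : Fintype ↥tᶜ := ht.fintype
  have hhead : Tendsto (fun m => ∑' i : ↥tᶜ, |a m i - b i|) atTop (𝓝 0) := by
    simp only [tsum_fintype]
    simpa using tendsto_finsetSum Finset.univ fun (i : ↥tᶜ) _ =>
      ((hlim i).sub_const (b i)).abs
  filter_upwards [ht_small, hhead.eventually (gt_mem_nhds (half_pos hε))] with m htail_m hhead_m
  calc ∑' i, |a m i - b i| = ∑' i : t, |a m i - b i| + ∑' i : ↥tᶜ, |a m i - b i| :=
        ((hsum m).tsum_subtype_add_tsum_subtype_compl t).symm
    _ ≤ ∑' i : t, (a m i + b i) + ∑' i : ↥tᶜ, |a m i - b i| := by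
        refine add_le_add_left (Summable.tsum_le_tsum (fun i => ?_) ((hsum m).subtype t)
          (((ha m).add hb).subtype t)) _
        have h := abs_sub (a m i.1) (b i.1)
        rw [abs_of_nonneg (ha0 m i.1), abs_of_nonneg (hb0 i.1)] at h
        exact h
    _ < ε / 2 + ε / 2 := add_lt_add_of_le_of_lt htail_m hhead_m
    _ = ε := add_halves ε

theorem ENNReal.exists_pos_mul_div_lt {C ε δ : ℝ≥0∞} (hC : C ≠ ∞) (hε : ε ≠ 0) (hδ : δ ≠ 0) :
    ∃ η > 0, η * C / ε < δ := by
  have h : Tendsto (fun η => η * C / ε) (𝓝 0) (𝓝 0) := by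
    simpa only [id, zero_mul, ENNReal.zero_div] using ENNReal.Tendsto.div_const
      (ENNReal.Tendsto.mul_const (tendsto_id (x := 𝓝 0)) (Or.inr hC)) (Or.inr hε)
  obtain ⟨η, hηδ, hη⟩ := (((h.mono_left nhdsWithin_le_nhds).eventually
    (gt_mem_nhds (pos_iff_ne_zero.2 hδ))).and
      (self_mem_nhdsWithin : Set.Ioi 0 ∈ 𝓝[>] (0 : ℝ≥0∞))).exists
  exact ⟨η, hη, hηδ⟩

theorem finite_compl_setOf_le_add (k : ℕ) : {q : ℕ × ℕ | k ≤ q.1 + q.2}ᶜ.Finite := by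
  refine (Set.finite_Iic (k, k)).subset fun q hq => ?_
  simp only [Set.mem_compl_iff, Set.mem_ofPred_eq, not_le] at hq
  exact ⟨by omega, by omega⟩

section

variable {Ω β ι : Type*} [MeasurableSpace Ω] [MeasurableSpace β] [Countable ι]
  {P : Measure Ω} {C : ℝ≥0∞}

section WeightedSums

variable {X : Ω → β} {Y : Ω → ι → ℝ≥0∞} {w : β → ι → ℝ≥0∞}
  (hX : Measurable X) (hY : Measurable Y) (hXY : IndepFun X Y P)
  (hYC : ∀ i, ∫⁻ ω, Y ω i ∂P = C) (hw : ∀ i, Measurable fun b => w b i)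
include hX hY hXY hYC hw

theorem lintegral_tsum_mul_of_indepFun :
    ∫⁻ ω, ∑' i, w (X ω) i * Y ω i ∂P = (∫⁻ ω, ∑' i, w (X ω) i ∂P) * C := by
  have hwX : ∀ i, Measurable fun ω => w (X ω) i := fun i => (hw i).comp hX
  have hYi : ∀ i, Measurable fun ω => Y ω i := fun i => (measurable_pi_apply i).comp hY
  rw [lintegral_tsum (f := fun i ω => w (X ω) i * Y ω i)
      fun i => ((hwX i).mul (hYi i)).aemeasurable,
    lintegral_tsum fun i => (hwX i).aemeasurable, ← ENNReal.tsum_mul_right]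
  refine tsum_congr fun i => ?_
  rw [← hYC i]
  exact lintegral_mul_eq_lintegral_mul_lintegral_of_indepFun (hwX i) (hYi i)
    (hXY.comp (hw i) (measurable_pi_apply i))

theorem setLIntegral_tsum_mul_le_of_indepFun [IsProbabilityMeasure P] (K : ℝ≥0∞) :
    ∫⁻ ω in {ω | ∑' i, w (X ω) i ≤ K}, ∑' i, w (X ω) i * Y ω i ∂P ≤ K * C := by
  set s : Set β := {b | ∑' i, w b i ≤ K}
  have hs : MeasurableSet s := measurableSet_le (Measurable.tsum hw) measurable_const
  have htrunc : ∀ ω, (X ⁻¹' s).indicator (fun ω => ∑' i, w (X ω) i * Y ω i) ω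
      = ∑' i, s.indicator (w · i) (X ω) * Y ω i := by
    intro ω
    by_cases hω : X ω ∈ s
    · simp only [Set.indicator_of_mem hω, Set.indicator_of_mem (Set.mem_preimage.2 hω)]
    · simp only [Set.indicator_of_notMem hω, Set.indicator_of_notMem (mt Set.mem_preimage.1 hω),
        zero_mul, tsum_zero]
  have hbound : ∀ b, ∑' i, s.indicator (w · i) b ≤ K := by
    intro b
    by_cases hb : b ∈ s
    · simp only [Set.indicator_of_mem hb]
      exact hb
    · simp only [Set.indicator_of_notMem hb, tsum_zero, zero_le]
  calc ∫⁻ ω in X ⁻¹' s, ∑' i, w (X ω) i * Y ω i ∂P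
      = ∫⁻ ω, ∑' i, s.indicator (w · i) (X ω) * Y ω i ∂P := by
        rw [← lintegral_indicator (hs.preimage hX), lintegral_congr htrunc]
    _ = (∫⁻ ω, ∑' i, s.indicator (w · i) (X ω) ∂P) * C :=
        lintegral_tsum_mul_of_indepFun hX hY hXY hYC fun i => (hw i).indicator hs
    _ ≤ (∫⁻ _, K ∂P) * C := by gcongr with ω; exact hbound (X ω)
    _ = K * C := by rw [lintegral_const, measure_univ, mul_one]

theorem ae_tsum_mul_ne_top_of_indepFun [IsProbabilityMeasure P] (hC : C ≠ ∞)
    (hfin : ∀ᵐ ω ∂P, ∑' i, w (X ω) i ≠ ∞) : ∀ᵐ ω ∂P, ∑' i, w (X ω) i * Y ω i ≠ ∞ := by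
  have hF : Measurable fun ω => ∑' i, w (X ω) i * Y ω i :=
    Measurable.tsum fun i => ((hw i).comp hX).mul ((measurable_pi_apply i).comp hY)
  have hK : ∀ K : ℕ, ∀ᵐ ω ∂P, ∑' i, w (X ω) i ≤ K → ∑' i, w (X ω) i * Y ω i ≠ ∞ := by
    intro K
    have hA : MeasurableSet {ω | ∑' i, w (X ω) i ≤ K} :=
      measurableSet_le ((Measurable.tsum hw).comp hX) measurable_const
    have h := ae_lt_top' hF.aemeasurable ((setLIntegral_tsum_mul_le_of_indepFun hX hY hXY hYC hw
      K).trans_lt (ENNReal.mul_lt_top (ENNReal.natCast_lt_top K) hC.lt_top)).ne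
    rw [ae_restrict_iff' hA] at h
    exact h.mono fun ω hω hωK => (hω hωK).ne
  filter_upwards [hfin, ae_all_iff.2 hK] with ω hω hωK
  obtain ⟨K, hK⟩ := ENNReal.exists_nat_gt hω
  exact hωK K hK.le

theorem measure_tsum_le_and_le_tsum_mul_le_of_indepFun [IsProbabilityMeasure P] (η : ℝ≥0∞)
    {ε : ℝ≥0∞} (hε : ε ≠ 0) (hε_top : ε ≠ ∞) :
    P {ω | ∑' i, w (X ω) i ≤ η ∧ ε ≤ ∑' i, w (X ω) i * Y ω i} ≤ η * C / ε := by
  have hF : Measurable fun ω => ∑' i, w (X ω) i * Y ω i :=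
    Measurable.tsum fun i => ((hw i).comp hX).mul ((measurable_pi_apply i).comp hY)
  have hA : MeasurableSet {ω | ∑' i, w (X ω) i ≤ η} :=
    measurableSet_le ((Measurable.tsum hw).comp hX) measurable_const
  calc P {ω | ∑' i, w (X ω) i ≤ η ∧ ε ≤ ∑' i, w (X ω) i * Y ω i}
      = P.restrict {ω | ∑' i, w (X ω) i ≤ η} {ω | ε ≤ ∑' i, w (X ω) i * Y ω i} := by
        rw [Measure.restrict_apply' hA, Set.ofPred_and, Set.inter_comm]
    _ ≤ (∫⁻ ω in {ω | ∑' i, w (X ω) i ≤ η}, ∑' i, w (X ω) i * Y ω i ∂P) / ε :=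
        meas_ge_le_lintegral_div hF.aemeasurable hε hε_top
    _ ≤ η * C / ε := by
        gcongr
        exact setLIntegral_tsum_mul_le_of_indepFun hX hY hXY hYC hw η

end WeightedSums

theorem ae_summable_mul_of_indepFun [IsProbabilityMeasure P] {U Y : Ω → ι → ℝ}
    (hU : Measurable U) (hY : Measurable Y) (hUY : IndepFun U Y P)
    (hYC : ∀ i, ∫⁻ ω, ‖Y ω i‖ₑ ∂P = C) (hC : C ≠ ∞) (hsum : ∀ᵐ ω ∂P, Summable (U ω)) :
    ∀ᵐ ω ∂P, Summable fun i => U ω i * Y ω i := by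
  have henorm : Measurable fun (y : ι → ℝ) i => ‖y i‖ₑ := by fun_prop
  have hfin : ∀ᵐ ω ∂P, ∑' i, ‖U ω i‖ₑ ≠ ∞ := by
    filter_upwards [hsum] with ω hω
    exact tsum_enorm_ne_top_iff_summable_norm.2 (by simpa only [Real.norm_eq_abs] using hω.abs)
  filter_upwards [ae_tsum_mul_ne_top_of_indepFun hU (henorm.comp hY)
    (hUY.comp measurable_id henorm) hYC (fun i => (measurable_pi_apply i).enorm) hC hfin]
    with ω hω
  exact Summable.of_enorm (by simpa only [enorm_mul, Function.comp_apply] using hω)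

theorem tendstoInMeasure_tsum_mul_of_indepFun [IsProbabilityMeasure P] {U : ℕ → Ω → ι → ℝ}
    {Ulim Y : Ω → ι → ℝ} (hU : ∀ m, Measurable (U m)) (hUlim : Measurable Ulim)
    (hY : Measurable Y) (hind : ∀ m, IndepFun (fun ω => (U m ω, Ulim ω)) Y P)
    (hYC : ∀ i, ∫⁻ ω, ‖Y ω i‖ₑ ∂P = C) (hC : C ≠ ∞)
    (hsum : ∀ m, ∀ᵐ ω ∂P, Summable (U m ω)) (hsum_lim : ∀ᵐ ω ∂P, Summable (Ulim ω))
    (hl1 : ∀ᵐ ω ∂P, Tendsto (fun m => ∑' i, |U m ω i - Ulim ω i|) atTop (𝓝 0)) :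
    TendstoInMeasure P (fun m ω => ∑' i, U m ω i * Y ω i) atTop
      fun ω => ∑' i, Ulim ω i * Y ω i := by
  have henorm : Measurable fun (y : ι → ℝ) i => ‖y i‖ₑ := by fun_prop
  have hw : ∀ i, Measurable fun b : (ι → ℝ) × (ι → ℝ) => ‖b.1 i - b.2 i‖ₑ := by fun_prop
  have hl1_meas : TendstoInMeasure P (fun m ω => ∑' i, |U m ω i - Ulim ω i|) atTop 0 :=
    tendstoInMeasure_of_tendsto_ae
      (fun m => (Measurable.tsum fun i => by fun_prop).aestronglyMeasurable) hl1
  have hsplit : ∀ m (ε η : ℝ≥0∞), ∀ᵐ ω ∂P,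
      ε ≤ edist (∑' i, U m ω i * Y ω i) (∑' i, Ulim ω i * Y ω i) →
        η ≤ edist (∑' i, |U m ω i - Ulim ω i|) 0 ∨
          (∑' i, ‖U m ω i - Ulim ω i‖ₑ ≤ η ∧
            ε ≤ ∑' i, ‖U m ω i - Ulim ω i‖ₑ * ‖Y ω i‖ₑ) := by
    intro m ε η
    filter_upwards [ae_summable_mul_of_indepFun (hU m) hY
        ((hind m).comp measurable_fst measurable_id) hYC hC (hsum m),
      ae_summable_mul_of_indepFun hUlim hY ((hind m).comp measurable_snd measurable_id) hYC hC
        hsum_lim, hsum m, hsum_lim] with ω hUY hUlimY hUω hUlimω hε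
    rw [or_iff_not_imp_left, not_le, edist_zero_right, enorm_tsum_abs (hUω.sub hUlimω)]
    exact fun hη => ⟨hη.le, hε.trans (edist_tsum_mul_le_tsum_enorm_sub_mul hUY hUlimY)⟩
  refine tendstoInMeasure_of_ne_top fun ε hε hε_top => ENNReal.tendsto_nhds_zero.2 fun δ hδ => ?_
  obtain ⟨η, hη, hηδ⟩ := ENNReal.exists_pos_mul_div_lt hC hε.ne' (ENNReal.half_pos hδ.ne').ne'
  filter_upwards [ENNReal.tendsto_nhds_zero.1 (hl1_meas η hη) (δ / 2) (ENNReal.half_pos hδ.ne')]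
    with m hm
  calc P {ω | ε ≤ edist (∑' i, U m ω i * Y ω i) (∑' i, Ulim ω i * Y ω i)}
      ≤ P ({ω | η ≤ edist (∑' i, |U m ω i - Ulim ω i|) 0} ∪
          {ω | ∑' i, ‖U m ω i - Ulim ω i‖ₑ ≤ η ∧
            ε ≤ ∑' i, ‖U m ω i - Ulim ω i‖ₑ * ‖Y ω i‖ₑ}) :=
        measure_mono_ae (hsplit m ε η)
    _ ≤ δ / 2 + δ / 2 := (measure_union_le _ _).trans (add_le_add hm
        ((measure_tsum_le_and_le_tsum_mul_le_of_indepFun ((hU m).prodMk hUlim) (henorm.comp hY)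
          ((hind m).comp measurable_id henorm) hYC hw η hε.ne' hε_top).trans hηδ.le))
    _ = δ := ENNReal.add_halves δ

end

theorem stmt16_general {Ω : Type*} [MeasurableSpace Ω] (P : Measure Ω) [IsProbabilityMeasure P]
    (α : ℝ)
    (h : ℕ → ℕ → Ω → ℝ) (hh_meas : ∀ i j, Measurable (h i j))
    (hh_ident : ∀ i j, Measure.map (h i j) P = Measure.map (h 0 0) P)
    (hh_mom : Integrable (fun ω => h 0 0 ω ^ (-(1 / α))) P)
    (u : ℕ → ℕ → ℕ → Ω → ℝ) (ulim : ℕ → ℕ → Ω → ℝ)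
    (hu_meas : ∀ m i j, Measurable (u m i j)) (hulim_meas : ∀ i j, Measurable (ulim i j))
    (hu_nonneg : ∀ m i j ω, 0 ≤ u m i j ω) (hulim_nonneg : ∀ i j ω, 0 ≤ ulim i j ω)
    -- the arrays `u`, `ulim` are (jointly) independent of the family `h`
    (hu_indep : IndepFun
      (fun ω => ((fun m i j => u m i j ω, fun i j => ulim i j ω) :
        (ℕ → ℕ → ℕ → ℝ) × (ℕ → ℕ → ℝ)))
      (fun ω => (fun p : ℕ × ℕ => h p.1 p.2 ω)) P)
    (hconv : ∀ᵐ ω ∂P, ∀ i j, Tendsto (fun m => u m i j ω) atTop (𝓝 (ulim i j ω)))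
    (htail : ∀ᵐ ω ∂P, ∀ η > (0 : ℝ), ∃ k : ℕ, ∀ᶠ m in atTop,
      ∑' p : {q : ℕ × ℕ // k ≤ q.1 + q.2}, (u m p.1.1 p.1.2 ω + ulim p.1.1 p.1.2 ω) ≤ η)
    (hu_sum : ∀ m, ∀ᵐ ω ∂P, Summable (fun p : ℕ × ℕ => u m p.1 p.2 ω))
    (hulim_sum : ∀ᵐ ω ∂P, Summable (fun p : ℕ × ℕ => ulim p.1 p.2 ω)) :
    TendstoInMeasure P
        (fun m ω => ∑' p : ℕ × ℕ, u m p.1 p.2 ω * h p.1 p.2 ω ^ (-(1 / α))) atTop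
        (fun ω => ∑' p : ℕ × ℕ, ulim p.1 p.2 ω * h p.1 p.2 ω ^ (-(1 / α))) ∧
      (∀ᵐ ω ∂P, Summable (fun p : ℕ × ℕ => ulim p.1 p.2 ω * h p.1 p.2 ω ^ (-(1 / α)))) ∧
      (∀ m, ∀ᵐ ω ∂P, Summable (fun p : ℕ × ℕ => u m p.1 p.2 ω * h p.1 p.2 ω ^ (-(1 / α)))) := by
  have hY : Measurable fun ω (p : ℕ × ℕ) => h p.1 p.2 ω ^ (-(1 / α)) := by fun_prop
  have hU : ∀ m, Measurable fun ω (p : ℕ × ℕ) => u m p.1 p.2 ω := by fun_prop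
  have hUlim : Measurable fun ω (p : ℕ × ℕ) => ulim p.1 p.2 ω := by fun_prop
  have hind : IndepFun (fun ω => (fun m (p : ℕ × ℕ) => u m p.1 p.2 ω,
      fun p : ℕ × ℕ => ulim p.1 p.2 ω)) (fun ω (p : ℕ × ℕ) => h p.1 p.2 ω ^ (-(1 / α))) P :=
    hu_indep.comp (φ := fun x => (fun m (p : ℕ × ℕ) => x.1 m p.1 p.2, fun p : ℕ × ℕ => x.2 p.1 p.2))
      (ψ := fun H p => H p ^ (-(1 / α))) (by fun_prop) (by fun_prop)
  have hYC : ∀ p : ℕ × ℕ, ∫⁻ ω, ‖h p.1 p.2 ω ^ (-(1 / α))‖ₑ ∂P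
      = ∫⁻ ω, ‖h 0 0 ω ^ (-(1 / α))‖ₑ ∂P := fun p => by
    have hg : Measurable fun x : ℝ => ‖x ^ (-(1 / α))‖ₑ := (measurable_id.pow_const _).enorm
    rw [← lintegral_map hg (hh_meas p.1 p.2), hh_ident, lintegral_map hg (hh_meas 0 0)]
  have hl1 : ∀ᵐ ω ∂P, Tendsto (fun m => ∑' p : ℕ × ℕ, |u m p.1 p.2 ω - ulim p.1 p.2 ω|)
      atTop (𝓝 0) := by
    filter_upwards [hconv, htail, ae_all_iff.2 hu_sum, hulim_sum] with ω hconv htail hsum hsum_lim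
    refine tendsto_tsum_abs_sub_of_tendsto_of_tail_le (fun m p => hu_nonneg m p.1 p.2 ω)
      (fun p => hulim_nonneg p.1 p.2 ω) hsum hsum_lim (fun p => hconv p.1 p.2) fun η hη => ?_
    obtain ⟨k, hk⟩ := htail η hη
    exact ⟨_, finite_compl_setOf_le_add k, hk⟩
  exact ⟨tendstoInMeasure_tsum_mul_of_indepFun hU hUlim hY
      (fun m => hind.comp (measurable_pi_apply m |>.prodMap measurable_id) measurable_id) hYC hh_mom.2.ne
      hu_sum hulim_sum hl1,
    ae_summable_mul_of_indepFun hUlim hY (hind.comp measurable_snd measurable_id) hYC hh_mom.2.ne hulim_sum,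
    fun m => ae_summable_mul_of_indepFun (hU m) hY
      (hind.comp ((measurable_pi_apply m).comp measurable_fst) measurable_id) hYC hh_mom.2.ne (hu_sum m)⟩

/-- Let `(h i j)` be i.i.d. positive random variables with `E[h^{-1/α}] < ∞`
(`α < 0`), and `(u m i j)`, `(ulim i j)` non-negative random arrays independent
of the `h`'s, with `u m i j → ulim i j` a.s. as `m → ∞` and a uniform a.s. tail
bound.  If `∑ ulim < ∞` a.s., then `X_m := ∑_{i,j} (u m i j) h_{ij}^{-1/α}`
converges in probability to `X := ∑_{i,j} (ulim i j) h_{ij}^{-1/α}`, and the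
sums defining `X_m` and `X` are a.s. finite (summable). -/
theorem stmt16 {Ω : Type*} [MeasurableSpace Ω] (P : Measure Ω) [IsProbabilityMeasure P]
    (α : ℝ) (hα : α < 0)
    (h : ℕ → ℕ → Ω → ℝ) (hh_meas : ∀ i j, Measurable (h i j))
    (hh_pos : ∀ i j, ∀ᵐ ω ∂P, 0 < h i j ω)
    (hh_indep : iIndepFun
      (fun (p : ℕ × ℕ) ω => h p.1 p.2 ω) P)
    (hh_ident : ∀ i j, Measure.map (h i j) P = Measure.map (h 0 0) P)
    (hh_mom : Integrable (fun ω => h 0 0 ω ^ (-(1 / α))) P)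
    (u : ℕ → ℕ → ℕ → Ω → ℝ) (ulim : ℕ → ℕ → Ω → ℝ)
    (hu_meas : ∀ m i j, Measurable (u m i j)) (hulim_meas : ∀ i j, Measurable (ulim i j))
    (hu_nonneg : ∀ m i j ω, 0 ≤ u m i j ω) (hulim_nonneg : ∀ i j ω, 0 ≤ ulim i j ω)
    -- the arrays `u`, `ulim` are (jointly) independent of the family `h`
    (hu_indep : IndepFun
      (fun ω => ((fun m i j => u m i j ω, fun i j => ulim i j ω) :
        (ℕ → ℕ → ℕ → ℝ) × (ℕ → ℕ → ℝ)))
      (fun ω => (fun p : ℕ × ℕ => h p.1 p.2 ω)) P)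
    (hconv : ∀ᵐ ω ∂P, ∀ i j, Tendsto (fun m => u m i j ω) atTop (𝓝 (ulim i j ω)))
    (htail : ∀ᵐ ω ∂P, ∀ η > (0 : ℝ), ∃ k : ℕ, ∀ᶠ m in atTop,
      ∑' p : {q : ℕ × ℕ // k ≤ q.1 + q.2}, (u m p.1.1 p.1.2 ω + ulim p.1.1 p.1.2 ω) ≤ η)
    (hu_sum : ∀ m, ∀ᵐ ω ∂P, Summable (fun p : ℕ × ℕ => u m p.1 p.2 ω))
    (hulim_sum : ∀ᵐ ω ∂P, Summable (fun p : ℕ × ℕ => ulim p.1 p.2 ω)) :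
    TendstoInMeasure P
        (fun m ω => ∑' p : ℕ × ℕ, u m p.1 p.2 ω * h p.1 p.2 ω ^ (-(1 / α))) atTop
        (fun ω => ∑' p : ℕ × ℕ, ulim p.1 p.2 ω * h p.1 p.2 ω ^ (-(1 / α))) ∧
      (∀ᵐ ω ∂P, Summable (fun p : ℕ × ℕ => ulim p.1 p.2 ω * h p.1 p.2 ω ^ (-(1 / α)))) ∧
      (∀ m, ∀ᵐ ω ∂P, Summable (fun p : ℕ × ℕ => u m p.1 p.2 ω * h p.1 p.2 ω ^ (-(1 / α)))) :=
  stmt16_general P α h hh_meas hh_ident hh_mom u ulim hu_meas hulim_meas hu_nonneg hulim_nonneg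
    hu_indep hconv htail hu_sum hulim_sum
end
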